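/- arXiv:1407.0871 — 8 statements merged into one kernel-verified Lean document; each statement's English description precedes it below -/
import Mathlib

section
/- The topological stable rank of the Bohl algebra B with respect to the topology of uniform convergence on ℝ is infinite. Precisely: for every positive integer n, the set of unimodular n-tuples of B is not dense in B^n for the sup-norm; i.e., there exist f_1, …, f_n ∈ B and ε > 0 such that for every unimodular n-tuple (g_1, …, g_n) of B, one has sup_{t ∈ ℝ} |f_j(t) − g_j(t)| ≥ ε for some j ∈ {1, …, n}. -/
open Complex
open scoped ENNReal NNReal

noncomputable section

/-- The Bohl algebra: the subalgebra of functions `ℝ → ℂ` (pointwise operations)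
spanned over `ℂ` by the functions `t ↦ t^k * exp (λ * t)`, `k ∈ ℕ`, `λ ∈ ℂ`. -/
def Bohl : Subalgebra ℂ (ℝ → ℂ) :=
  Algebra.adjoin ℂ
    {g : ℝ → ℂ | ∃ (k : ℕ) (l : ℂ), g = fun t : ℝ => (t : ℂ) ^ k * Complex.exp (l * t)}

/-!
Take `f j t = exp (v j * t) - 2` with `v` linearly independent over `ℚ`, and `ε = 1`.
If `g` is `1`-close to `f`, then each `g j - exp (v j * ·)` is a bounded Bohl function, and a
bounded Bohl function has only purely imaginary frequencies. This, like the linear independence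
of the functions `t ^ k * exp (λ t)`, follows by applying difference operators
`F ↦ F (· + s) - a * F`, which strip an exponential polynomial down to one term `c * exp (λ t)`.

By that independence Bohl functions are the formal sums `∑ p_λ(X) e^{λX}`, and every additive
character `ψ` of `ℝ` gives an algebra homomorphism `p e^{λX} ↦ p(0) ψ(Re λ)` that agrees with
evaluation at `0` on functions with imaginary frequencies. By the `ℚ`-independence of `v` we may
take `ψ (v j) = 1 - g j 0`, which is nonzero since `‖g j 0 - f j 0‖ < 1`; this homomorphism then
kills every `g j`, so `g` is not unimodular.
-/

open Polynomial

theorem Polynomial.taylor_ne_self {R : Type*} [CommRing R] [IsDomain R] [CharZero R]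
    {p : R[X]} {s : R} (hs : s ≠ 0) (hp : 0 < p.natDegree) : taylor s p ≠ p := by
  intro h
  have hperiodic (k : ℕ) : p.eval (k * s) = p.eval 0 := by
    induction k with
    | zero => simp
    | succ k ih => rw [Nat.cast_succ, add_one_mul, ← taylor_eval, h, ih]
  have hroots : {x | (p - C (p.eval 0)).IsRoot x}.Infinite :=
    Set.infinite_of_injective_forall_mem (f := fun k : ℕ => (k : R) * s)
      (fun _ _ hk => Nat.cast_injective (mul_right_cancel₀ hs hk)) (by simp [hperiodic])
  rw [sub_eq_zero.mp (eq_zero_of_infinite_isRoot _ hroots), natDegree_C] at hp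
  exact hp.false

def expPoly (Λ : Finset ℂ) (p : ℂ → ℂ[X]) (t : ℝ) : ℂ :=
  ∑ l ∈ Λ, (p l).eval (t : ℂ) * exp (l * t)

def shiftSub (s : ℝ) (a ν : ℂ) (p : ℂ[X]) : ℂ[X] :=
  exp (ν * s) • taylor (s : ℂ) p - a • p

section shiftSub

variable {s : ℝ} {a ν : ℂ} {p : ℂ[X]}

theorem expPoly_shiftSub (Λ : Finset ℂ) (p : ℂ → ℂ[X]) (s : ℝ) (a : ℂ) (t : ℝ) :
    expPoly Λ (fun l => shiftSub s a l (p l)) t = expPoly Λ p (t + s) - a * expPoly Λ p t := by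
  simp only [expPoly, shiftSub, Finset.mul_sum, ← Finset.sum_sub_distrib]
  refine Finset.sum_congr rfl fun l _ => ?_
  simp only [eval_sub, eval_smul, smul_eq_mul, taylor_eval, ofReal_add, mul_add, exp_add]
  ring

@[simp]
theorem shiftSub_zero : shiftSub s a ν 0 = 0 := by simp [shiftSub]

theorem degree_shiftSub_le : (shiftSub s a ν p).degree ≤ p.degree :=
  (degree_sub_le _ _).trans <| max_le ((degree_smul_le _ _).trans (degree_taylor p _).le)
    (degree_smul_le _ _)

theorem degree_shiftSub_self_lt (hp : p ≠ 0) :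
    (shiftSub s (exp (ν * s)) ν p).degree < p.degree := by
  rw [shiftSub, ← smul_sub]
  exact (degree_smul_le _ _).trans_lt
    (degree_sub_lt_right (degree_taylor p _) hp (leadingCoeff_taylor _ p))

theorem shiftSub_ne_zero (ha : a ≠ exp (ν * s)) (hp : p ≠ 0) : shiftSub s a ν p ≠ 0 := by
  intro h
  have := congrArg (coeff · p.natDegree) h
  simp only [shiftSub, coeff_sub, coeff_smul, smul_eq_mul, coeff_taylor_natDegree, coeff_zero,
    coeff_natDegree, ← sub_mul] at this
  exact mul_ne_zero (sub_ne_zero.mpr ha.symm) (leadingCoeff_ne_zero.mpr hp) this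

theorem shiftSub_self_ne_zero (hs : s ≠ 0) (hp : 0 < p.natDegree) :
    shiftSub s (exp (ν * s)) ν p ≠ 0 := by
  rw [shiftSub, ← smul_sub, smul_ne_zero_iff]
  exact ⟨exp_ne_zero _, sub_ne_zero.mpr (taylor_ne_self (ofReal_ne_zero.mpr hs) hp)⟩

end shiftSub

theorem exists_exp_mul_ne {μ ν : ℂ} (h : μ ≠ ν) : ∃ s : ℝ, exp (μ * s) ≠ exp (ν * s) := by
  have hd : 0 < ‖μ - ν‖ := norm_pos_iff.mpr (sub_ne_zero.mpr h)
  -- `(μ - ν) s` then has norm `1`: nonzero, yet too small to be a multiple of `2πi`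
  refine ⟨‖μ - ν‖⁻¹, fun heq => ?_⟩
  obtain ⟨k, hk⟩ := exp_eq_one_iff.mp (by rw [sub_mul, exp_sub, heq, div_self (exp_ne_zero _)] :
    exp ((μ - ν) * (‖μ - ν‖⁻¹ : ℝ)) = 1)
  have hnorm : ‖(μ - ν) * (‖μ - ν‖⁻¹ : ℝ)‖ = 1 := by
    rw [norm_mul, norm_real, norm_inv, norm_norm, mul_inv_cancel₀ hd.ne']
  rw [hk, norm_mul, norm_intCast, norm_mul, norm_mul, norm_I, Complex.norm_two, norm_real,
    Real.norm_of_nonneg Real.pi_pos.le, mul_one] at hnorm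
  have hk0 : (1 : ℝ) ≤ |(k : ℝ)| := by
    refine mod_cast Int.one_le_abs fun hk0 => ?_
    simp [hk0] at hnorm
  nlinarith [Real.pi_gt_three]

def degWeight (p : ℂ[X]) : ℕ := if p = 0 then 0 else p.natDegree + 1

theorem degWeight_le_of_degree_le {p q : ℂ[X]} (h : q.degree ≤ p.degree) :
    degWeight q ≤ degWeight p := by
  unfold degWeight
  split_ifs with hq hp hp
  · rfl
  · exact Nat.zero_le _
  · exact absurd (by simpa [hp] using h) hq
  · exact Nat.succ_le_succ (natDegree_le_natDegree h)

theorem degWeight_lt_of_degree_lt {p q : ℂ[X]} (h : q.degree < p.degree) :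
    degWeight q < degWeight p := by
  have hp : p ≠ 0 := fun hp => by simp [hp] at h
  unfold degWeight
  split_ifs with hq
  · exact Nat.succ_pos _
  · exact Nat.succ_lt_succ (natDegree_lt_natDegree hq h)

theorem sum_degWeight_shiftSub_lt {Λ : Finset ℂ} {p : ℂ → ℂ[X]} {l₁ : ℂ} (hl₁ : l₁ ∈ Λ)
    (hp : p l₁ ≠ 0) (s : ℝ) :
    ∑ l ∈ Λ, degWeight (shiftSub s (exp (l₁ * s)) l (p l)) < ∑ l ∈ Λ, degWeight (p l) :=
  Finset.sum_lt_sum (fun _ _ => degWeight_le_of_degree_le degree_shiftSub_le)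
    ⟨l₁, hl₁, degWeight_lt_of_degree_lt (degree_shiftSub_self_lt hp)⟩

theorem exists_shiftSub_lowering {Λ : Finset ℂ} {p : ℂ → ℂ[X]} {l₀ : ℂ} (hl₀ : l₀ ∈ Λ)
    (hp : p l₀ ≠ 0) (h : ¬ ((∀ l ∈ Λ, l ≠ l₀ → p l = 0) ∧ (p l₀).natDegree = 0)) :
    ∃ s a, ∑ l ∈ Λ, degWeight (shiftSub s a l (p l)) < ∑ l ∈ Λ, degWeight (p l) ∧
      shiftSub s a l₀ (p l₀) ≠ 0 := by
  rw [not_and_or] at h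
  push Not at h
  rcases h with ⟨l₁, hl₁, hne, hp₁⟩ | hdeg
  · obtain ⟨s, hs⟩ := exists_exp_mul_ne hne
    exact ⟨s, _, sum_degWeight_shiftSub_lt hl₁ hp₁ s, shiftSub_ne_zero hs hp⟩
  · exact ⟨1, _, sum_degWeight_shiftSub_lt hl₀ hp 1,
      shiftSub_self_ne_zero one_ne_zero (Nat.pos_of_ne_zero hdeg)⟩

theorem exists_const_mul_exp_of_shift_closed {P : (ℝ → ℂ) → Prop}
    (hP : ∀ F s a, P F → P fun t => F (t + s) - a * F t)
    {Λ : Finset ℂ} {p : ℂ → ℂ[X]} {l₀ : ℂ} (hl₀ : l₀ ∈ Λ) (hp : p l₀ ≠ 0)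
    (hF : P (expPoly Λ p)) : ∃ c ≠ 0, P fun t => c * exp (l₀ * t) := by
  induction hN : ∑ l ∈ Λ, degWeight (p l) using Nat.strong_induction_on generalizing p with
  | _ N ih =>
  by_cases hsingle : (∀ l ∈ Λ, l ≠ l₀ → p l = 0) ∧ (p l₀).natDegree = 0
  · obtain ⟨hzero, hdeg⟩ := hsingle
    have hC := eq_C_of_natDegree_eq_zero hdeg
    refine ⟨(p l₀).coeff 0, fun h0 => hp (by rw [hC, h0, C_0]), ?_⟩
    convert hF using 2 with t
    rw [expPoly, Finset.sum_eq_single_of_mem l₀ hl₀ fun l hl hne => by simp [hzero l hl hne]]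
    conv_rhs => rw [hC, eval_C]
  · obtain ⟨s, a, hlt, hne⟩ := exists_shiftSub_lowering hl₀ hp hsingle
    refine ih _ (hN ▸ hlt) hne ?_ rfl
    convert hP _ s a hF using 1
    exact funext (expPoly_shiftSub Λ p s a)

theorem re_eq_zero_of_norm_const_mul_exp_le {c l : ℂ} (hc : c ≠ 0) {M : ℝ}
    (h : ∀ t : ℝ, ‖c * exp (l * t)‖ ≤ M) : l.re = 0 := by
  by_contra hre
  have hcpos : 0 < ‖c‖ := norm_pos_iff.mpr hc
  have hM := h (M / ‖c‖ / l.re)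
  rw [norm_mul, norm_exp, re_mul_ofReal, mul_div_cancel₀ _ hre] at hM
  refine (lt_irrefl M) (lt_of_lt_of_le ?_ hM)
  calc M < ‖c‖ * (M / ‖c‖ + 1) := by rw [mul_add, mul_div_cancel₀ _ hcpos.ne']; linarith
    _ ≤ ‖c‖ * Real.exp (M / ‖c‖) := by gcongr; exact Real.add_one_le_exp _

theorem expPoly_coeff_eq_zero {Λ : Finset ℂ} {p : ℂ → ℂ[X]} (h : expPoly Λ p = 0) :
    ∀ l ∈ Λ, p l = 0 := by
  intro l hl
  by_contra hp
  obtain ⟨c, hc, hzero⟩ := exists_const_mul_exp_of_shift_closed (P := (· = 0))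
    (fun F s a hF => by ext; simp [hF]) hl hp h
  simpa [hc] using congrFun hzero 0

theorem re_eq_zero_of_bounded_expPoly {Λ : Finset ℂ} {p : ℂ → ℂ[X]}
    (h : ∃ M, ∀ t, ‖expPoly Λ p t‖ ≤ M) : ∀ l ∈ Λ, p l ≠ 0 → l.re = 0 := by
  intro l hl hp
  have hshift (F : ℝ → ℂ) (s : ℝ) (a : ℂ) (hF : ∃ M, ∀ t, ‖F t‖ ≤ M) :
      ∃ M, ∀ t, ‖F (t + s) - a * F t‖ ≤ M := by
    obtain ⟨M, hM⟩ := hF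
    refine ⟨M + ‖a‖ * M, fun t => (norm_sub_le _ _).trans ?_⟩
    rw [norm_mul]
    gcongr
    exacts [hM _, hM _]
  obtain ⟨c, hc, M, hM⟩ := exists_const_mul_exp_of_shift_closed hshift hl hp h
  exact re_eq_zero_of_norm_const_mul_exp_le hc hM

abbrev FormalBohl := AddMonoidAlgebra ℂ[X] ℂ

namespace FormalBohl

def expChar : AddChar ℂ (ℝ → ℂ) where
  toFun l t := exp (l * t)
  map_zero_eq_one' := by ext; simp
  map_add_eq_mul' l m := by ext; simp [add_mul, exp_add]

def eval : FormalBohl →ₐ[ℂ] (ℝ → ℂ) :=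
  AddMonoidAlgebra.liftNCAlgHom (aeval fun t : ℝ => (t : ℂ)) expChar.toMonoidHom
    fun _ _ => Commute.all _ _

theorem eval_single (l : ℂ) (p : ℂ[X]) (t : ℝ) :
    eval (AddMonoidAlgebra.single l p) t = p.eval (t : ℂ) * exp (l * t) := by
  simp [eval, expChar, AddMonoidAlgebra.liftNC_single]

theorem eval_apply (r : FormalBohl) : eval r = expPoly r.coeff.support r.coeff := by
  ext t
  conv_lhs => rw [← AddMonoidAlgebra.sum_coeff_single r]
  simp [Finsupp.sum, eval_single, expPoly]

theorem eval_injective : Function.Injective eval := by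
  rw [injective_iff_map_eq_zero]
  intro r hr
  rw [eval_apply] at hr
  ext l : 2
  by_cases hl : l ∈ r.coeff.support
  · simpa using expPoly_coeff_eq_zero hr l hl
  · simpa using hl

theorem re_eq_zero_of_bounded {r : FormalBohl} (h : ∃ M, ∀ t, ‖eval r t‖ ≤ M) :
    ∀ l ∈ r.coeff.support, l.re = 0 := fun l hl =>
  re_eq_zero_of_bounded_expPoly (eval_apply r ▸ h) l hl (Finsupp.mem_support_iff.mp hl)

def twistedEvalZero (ψ : AddChar ℝ ℂ) : FormalBohl →ₐ[ℂ] ℂ :=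
  AddMonoidAlgebra.liftNCAlgHom (aeval 0) (ψ.compAddMonoidHom reAddGroupHom).toMonoidHom
    fun _ _ => Commute.all _ _

theorem twistedEvalZero_single (ψ : AddChar ℝ ℂ) (l : ℂ) (p : ℂ[X]) :
    twistedEvalZero ψ (AddMonoidAlgebra.single l p) = p.eval 0 * ψ l.re := by
  simp [twistedEvalZero, AddMonoidAlgebra.liftNC_single]

theorem twistedEvalZero_eq_eval_zero (ψ : AddChar ℝ ℂ) {r : FormalBohl}
    (h : ∀ l ∈ r.coeff.support, l.re = 0) : twistedEvalZero ψ r = eval r 0 := by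
  conv_lhs => rw [← AddMonoidAlgebra.sum_coeff_single r]
  rw [eval_apply, expPoly, map_finsuppSum, Finsupp.sum]
  refine Finset.sum_congr rfl fun l hl => ?_
  simp [twistedEvalZero_single, h l hl]

theorem exists_eval_eq_of_mem_bohl {f : ℝ → ℂ} (hf : f ∈ Bohl) : ∃ r, eval r = f := by
  suffices Bohl ≤ eval.range from this hf
  refine Algebra.adjoin_le ?_
  rintro _ ⟨k, l, rfl⟩
  exact ⟨AddMonoidAlgebra.single l (X ^ k), funext fun t => by simp [eval_single]⟩

end FormalBohl

theorem exists_linearIndependent_rat_real (n : ℕ) : ∃ v : Fin n → ℝ, LinearIndependent ℚ v := by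
  have hrank : Module.rank ℚ ℝ = Cardinal.continuum := by
    rw [Module.Free.rank_eq_mk_of_infinite_lt] <;>
      simp [Cardinal.mk_real, Cardinal.aleph0_lt_continuum]
  obtain ⟨s, hcard, hs⟩ := le_rank_iff_exists_linearIndependent_finset.1
    (hrank ▸ (Cardinal.nat_lt_continuum n).le)
  exact ⟨_, hs.comp _ (s.equivFin.symm.injective.comp (Fin.cast_injective hcard.symm))⟩

theorem LinearIndependent.exists_linearMap_eq {K V W ι : Type*} [DivisionRing K] [AddCommGroup V]
    [Module K V] [AddCommGroup W] [Module K W] {v : ι → V} (hv : LinearIndependent K v)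
    (u : ι → W) : ∃ L : V →ₗ[K] W, ∀ j, L (v j) = u j := by
  obtain ⟨g, hg⟩ := (Finsupp.linearCombination K v).exists_leftInverse_of_injective
    (LinearMap.ker_eq_bot.mpr hv)
  refine ⟨Finsupp.linearCombination K u ∘ₗ g, fun j => ?_⟩
  have hgv : g (v j) = Finsupp.single j 1 := by
    simpa using LinearMap.congr_fun hg (Finsupp.single j 1)
  simp [hgv]

theorem exists_addChar_eq {ι : Type*} {v : ι → ℝ} (hv : LinearIndependent ℚ v) {w : ι → ℂ}
    (hw : ∀ j, w j ≠ 0) : ∃ ψ : AddChar ℝ ℂ, ∀ j, ψ (v j) = w j := by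
  obtain ⟨L, hL⟩ := hv.exists_linearMap_eq fun j => log (w j)
  let ψ : AddChar ℝ ℂ :=
    { toFun := fun t => exp (L t)
      map_zero_eq_one' := by simp
      map_add_eq_mul' := fun s t => by simp [exp_add] }
  exact ⟨ψ, fun j => by simp [ψ, hL, exp_log (hw j)]⟩

theorem not_unimodular_of_bounded_sub_exp {ι : Type*} [Fintype ι] {v : ι → ℝ}
    (hv : LinearIndependent ℚ v) {g : ι → ℝ → ℂ} (hg : ∀ j, g j ∈ Bohl)
    (hbdd : ∀ j, ∃ M, ∀ t : ℝ, ‖g j t - exp (v j * t)‖ ≤ M) (hg0 : ∀ j, g j 0 ≠ 1) :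
    ¬ ∃ x : ι → ℝ → ℂ, (∀ j, x j ∈ Bohl) ∧ ∑ j, x j * g j = 1 := by
  rintro ⟨x, hx, hsum⟩
  choose G hG using fun j => FormalBohl.exists_eval_eq_of_mem_bohl (hg j)
  choose X hX using fun j => FormalBohl.exists_eval_eq_of_mem_bohl (hx j)
  have hone : ∑ j, X j * G j = 1 := FormalBohl.eval_injective (by simp [hX, hG, hsum])
  set r := fun j => G j - AddMonoidAlgebra.single (v j : ℂ) 1
  have hr (j) : FormalBohl.eval (r j) = fun t => g j t - exp (v j * t) := by
    ext t; simp [r, hG, FormalBohl.eval_single]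
  have him (j) : ∀ l ∈ (r j).coeff.support, l.re = 0 :=
    FormalBohl.re_eq_zero_of_bounded (hr j ▸ hbdd j)
  obtain ⟨ψ, hψ⟩ := exists_addChar_eq hv (w := fun j => 1 - g j 0)
    fun j => sub_ne_zero.mpr (hg0 j).symm
  -- `FormalBohl.twistedEvalZero ψ` sends `G j = r j + e^{v j t}` to `(g j 0 - 1) + ψ (v j) = 0`
  have hG0 (j) : FormalBohl.twistedEvalZero ψ (G j) = 0 := by
    rw [show G j = r j + AddMonoidAlgebra.single (v j : ℂ) 1 by simp [r], map_add,
      FormalBohl.twistedEvalZero_eq_eval_zero ψ (him j), FormalBohl.twistedEvalZero_single, hr j,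
      ofReal_re, hψ]
    simp
  simpa [hG0] using congrArg (FormalBohl.twistedEvalZero ψ) hone

theorem tsr_Bohl_infinite_general (n : ℕ) :
    ∃ f : Fin n → ℝ → ℂ, (∀ j, f j ∈ Bohl) ∧
      ∃ ε : ℝ, 0 < ε ∧
        ∀ g : Fin n → ℝ → ℂ, (∀ j, g j ∈ Bohl) →
          (∃ x : Fin n → ℝ → ℂ, (∀ j, x j ∈ Bohl) ∧ (∑ j, x j * g j) = 1) →
          ∃ j, ENNReal.ofReal ε ≤ ⨆ t : ℝ, (‖f j t - g j t‖₊ : ℝ≥0∞) := by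
  obtain ⟨v, hv⟩ := exists_linearIndependent_rat_real n
  have hexp (j) : (fun t : ℝ => exp (v j * t)) ∈ Bohl :=
    Algebra.subset_adjoin ⟨0, v j, by simp⟩
  refine ⟨fun j t => exp (v j * t) - 2, fun j => Bohl.sub_mem (hexp j) (Bohl.algebraMap_mem 2),
    1, one_pos, fun g hg hunit => ?_⟩
  by_contra! hclose
  have hlt (j) (t : ℝ) : ‖exp (v j * t) - 2 - g j t‖ < 1 := by
    have := (le_iSup (fun t : ℝ => (‖exp (v j * t) - 2 - g j t‖₊ : ℝ≥0∞)) t).trans_lt (hclose j)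
    rwa [ENNReal.ofReal_one, ENNReal.coe_lt_one_iff, ← NNReal.coe_lt_one, coe_nnnorm] at this
  refine not_unimodular_of_bounded_sub_exp hv hg (fun j => ⟨3, fun t => ?_⟩) (fun j h0 => ?_) hunit
  · calc ‖g j t - exp (v j * t)‖ = ‖(g j t - (exp (v j * t) - 2)) - 2‖ := by ring_nf
      _ ≤ ‖exp (v j * t) - 2 - g j t‖ + ‖(2 : ℂ)‖ := norm_sub_rev (g j t) _ ▸ norm_sub_le _ _
      _ ≤ 3 := by rw [Complex.norm_two]; linarith [hlt j t]
  · simpa [h0] using (hlt j 0)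

/-- The topological stable rank of the Bohl algebra (with the topology of uniform
convergence on `ℝ`) is infinite: for every `n ≥ 1`, the unimodular `n`-tuples of `B` are
not dense in `Bⁿ` for the sup-norm. -/
theorem tsr_Bohl_infinite (n : ℕ) (hn : 0 < n) :
    ∃ f : Fin n → ℝ → ℂ, (∀ j, f j ∈ Bohl) ∧
      ∃ ε : ℝ, 0 < ε ∧
        ∀ g : Fin n → ℝ → ℂ, (∀ j, g j ∈ Bohl) →
          (∃ x : Fin n → ℝ → ℂ, (∀ j, x j ∈ Bohl) ∧ (∑ j, x j * g j) = 1) →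
          ∃ j, ENNReal.ofReal ε ≤ ⨆ t : ℝ, (‖f j t - g j t‖₊ : ℝ≥0∞) :=
  tsr_Bohl_infinite_general n
end
end

section
/- There exists a ring homomorphism Ψ from the Bohl algebra B to the ring of functions ℝ → ℂ (with pointwise operations) such that for every k ∈ ℕ, every c ∈ ℂ and every λ ∈ ℂ, Ψ maps the function t ↦ c · t^k · exp(λ·t) to the function t ↦ c · exp(i·Im(λ)·t). In particular Ψ takes values in the set of generalized trigonometric polynomials, and Ψ(1) = 1. -/
/-
The functions `t ↦ t^k e^{λt}` are linearly independent: each is a joint generalized eigenvector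
of all translations `f ↦ f(· + s)`, with joint eigenvalue the character `s ↦ e^{λs}`; distinct `λ`
give distinct characters, joint generalized eigenspaces of commuting operators for distinct
characters are independent, and for a fixed `λ` independence reduces to that of the monomials
`t^k`. Hence `B` is isomorphic to the monoid algebra `ℂ[ℕ × ℂ]`, and `Ψ` is the algebra map
induced by the multiplicative character `(k, λ) ↦ (t ↦ e^{i Im(λ) t})`.
-/

open Complex

noncomputable section

/-- A generalized trigonometric polynomial: `t ↦ ∑ aⱼ exp(i λⱼ t)` with `aⱼ ∈ ℂ`, `λⱼ ∈ ℝ`. -/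
def IsTrigPoly (f : ℝ → ℂ) : Prop :=
  ∃ (N : ℕ) (a : Fin N → ℂ) (l : Fin N → ℝ),
    f = fun t : ℝ => ∑ j, a j * Complex.exp (Complex.I * (l j : ℂ) * (t : ℂ))

open Polynomial Module Finset

def translateEnd (s : ℝ) : End ℂ (ℝ → ℂ) := LinearMap.funLeft ℂ ℂ (· + s)

@[simp]
lemma translateEnd_apply (s : ℝ) (f : ℝ → ℂ) (t : ℝ) : translateEnd s f t = f (t + s) := rfl

lemma commute_translateEnd (s r : ℝ) : Commute (translateEnd s) (translateEnd r) :=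
  LinearMap.ext fun f => funext fun t => by simp [add_right_comm]

def powExp (k : ℕ) (l : ℂ) : ℝ → ℂ := fun t => (t : ℂ) ^ k * exp (l * t)

lemma translateEnd_sub_apply_powExp (s : ℝ) (k : ℕ) (l : ℂ) :
    (translateEnd s - exp (l * s) • 1) (powExp k l) =
      ∑ j ∈ range k, (exp (l * s) * k.choose j * (s : ℂ) ^ (k - j)) • powExp j l := by
  funext t
  simp only [LinearMap.sub_apply, LinearMap.smul_apply, End.one_apply, translateEnd_apply, powExp,
    Pi.sub_apply, Finset.sum_apply, Pi.smul_apply, smul_eq_mul, ofReal_add, add_pow, sum_range_succ,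
    Nat.choose_self, Nat.sub_self, pow_zero, Nat.cast_one, mul_one, mul_add, exp_add, add_mul,
    Finset.sum_mul]
  rw [add_sub_assoc, add_eq_left.mpr (by ring)]
  exact sum_congr rfl fun j _ => by ring

lemma powExp_mem_maxGenEigenspace (s : ℝ) (l : ℂ) (k : ℕ) :
    powExp k l ∈ (translateEnd s).maxGenEigenspace (exp (l * s)) := by
  induction k using Nat.strong_induction_on with
  | _ k ih =>
    have hsub : (translateEnd s - exp (l * s) • 1) (powExp k l) ∈
        (translateEnd s).maxGenEigenspace (exp (l * s)) :=
      translateEnd_sub_apply_powExp s k l ▸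
        Submodule.sum_mem _ fun j hj => Submodule.smul_mem _ _ (ih j (mem_range.mp hj))
    obtain ⟨n, hn⟩ := (End.mem_maxGenEigenspace _ _ _).mp hsub
    exact (End.mem_maxGenEigenspace _ _ _).mpr ⟨n + 1, by rwa [pow_succ, Module.End.mul_apply]⟩

lemma iSupIndep_iInf_maxGenEigenspace_translateEnd :
    iSupIndep fun χ : ℝ → ℂ => ⨅ s, (translateEnd s).maxGenEigenspace (χ s) :=
  End.independent_iInf_maxGenEigenspace_of_forall_mapsTo _ fun s r _ =>
    End.mapsTo_maxGenEigenspace_of_comm (commute_translateEnd r s) _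

lemma linearIndependent_powExp_fst (l : ℂ) : LinearIndependent ℂ fun k => powExp k l := by
  let L : ℂ[X] →ₗ[ℂ] ℝ → ℂ :=
    { toFun P t := P.eval (t : ℂ) * exp (l * t)
      map_add' P Q := funext fun t => by simp [add_mul]
      map_smul' c P := funext fun t => by simp [mul_assoc] }
  have hL : LinearMap.ker L = ⊥ := by
    refine LinearMap.ker_eq_bot'.mpr fun P hP => eq_zero_of_infinite_isRoot P ?_
    refine (Set.infinite_range_of_injective ofReal_injective).mono ?_
    rintro _ ⟨t, rfl⟩
    exact (mul_eq_zero.mp (congrFun hP t)).resolve_right (exp_ne_zero _)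
  have hL_monomial : (fun k => powExp k l) = L ∘ basisMonomials ℂ := by
    funext k t
    simp [L, powExp]
  exact hL_monomial ▸ (basisMonomials ℂ).linearIndependent.map' L hL

lemma injective_exp_mul_ofReal : Function.Injective fun (l : ℂ) (s : ℝ) => exp (l * s) := by
  intro l μ h
  have hderiv (l : ℂ) : HasDerivAt (fun s : ℝ => exp (l * s)) l 0 := by
    simpa using (((hasDerivAt_id (0 : ℂ)).const_mul l).cexp).comp_ofReal
  replace h : (fun s : ℝ => exp (l * s)) = fun s : ℝ => exp (μ * s) := h
  exact (hderiv l).unique (h ▸ hderiv μ)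

theorem linearIndependent_powExp : LinearIndependent ℂ fun p : ℕ × ℂ => powExp p.1 p.2 := by
  have hindep := iSupIndep_iInf_maxGenEigenspace_translateEnd.comp injective_exp_mul_ofReal
  have hspan (l : ℂ) : Submodule.span ℂ (Set.range fun k => powExp k l) ≤
      ⨅ s, (translateEnd s).maxGenEigenspace (exp (l * s)) :=
    Submodule.span_le.mpr <| Set.range_subset_iff.mpr fun k =>
      Submodule.mem_iInf _ |>.mpr fun s => powExp_mem_maxGenEigenspace s l k
  have hsigma := linearIndependent_iUnion_finite linearIndependent_powExp_fst fun l t _ hl =>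
    (hindep.disjoint_biSup hl).mono (hspan l) (iSup₂_mono fun μ _ => hspan μ)
  exact hsigma.comp ((Equiv.prodComm ℕ ℂ).trans (Equiv.sigmaEquivProd ℂ ℕ).symm) (Equiv.injective _)

def powExpHom : Multiplicative (ℕ × ℂ) →* (ℝ → ℂ) where
  toFun p := powExp p.toAdd.1 p.toAdd.2
  map_one' := funext fun t => by simp [powExp]
  map_mul' p q := funext fun t => by
    simp only [powExp, toAdd_mul, Prod.fst_add, Prod.snd_add, Pi.mul_apply, pow_add, add_mul,
      exp_add]
    ring

def oscHom : Multiplicative (ℕ × ℂ) →* (ℝ → ℂ) where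
  toFun p t := exp (I * p.toAdd.2.im * t)
  map_one' := funext fun t => by simp
  map_mul' p q := funext fun t => by
    simp only [toAdd_mul, Prod.snd_add, add_im, ofReal_add, Pi.mul_apply, ← exp_add]
    ring_nf

def powExpEval : AddMonoidAlgebra ℂ (ℕ × ℂ) →ₐ[ℂ] ℝ → ℂ :=
  AddMonoidAlgebra.lift ℂ (ℝ → ℂ) (ℕ × ℂ) powExpHom

lemma injective_powExpEval : Function.Injective powExpEval := by
  have hcoeff : ⇑powExpEval = Finsupp.linearCombination ℂ (fun p : ℕ × ℂ => powExp p.1 p.2) ∘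
      AddMonoidAlgebra.coeff := by
    funext x
    rw [Function.comp_apply, powExpEval, AddMonoidAlgebra.lift_apply,
      Finsupp.linearCombination_apply]
    rfl
  rw [hcoeff]
  exact Function.Injective.comp linearIndependent_powExp AddMonoidAlgebra.coeff_injective

lemma range_powExpEval : powExpEval.range = Bohl := by
  apply le_antisymm
  · rintro _ ⟨x, rfl⟩
    change powExpEval x ∈ Bohl
    rw [powExpEval, AddMonoidAlgebra.lift_apply]
    refine Subalgebra.sum_mem _ fun p _ => Subalgebra.smul_mem _ ?_ _
    exact Algebra.subset_adjoin ⟨p.1, p.2, rfl⟩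
  · refine Algebra.adjoin_le ?_
    rintro _ ⟨k, l, rfl⟩
    exact ⟨AddMonoidAlgebra.single (k, l) 1, by
      change powExpEval _ = _
      rw [powExpEval, AddMonoidAlgebra.lift_single, one_smul]; rfl⟩

def bohlEquiv : AddMonoidAlgebra ℂ (ℕ × ℂ) ≃ₐ[ℂ] Bohl :=
  (AlgEquiv.ofInjective powExpEval injective_powExpEval).trans
    (Subalgebra.equivOfEq _ _ range_powExpEval)

lemma coe_bohlEquiv_single (k : ℕ) (l c : ℂ) :
    (bohlEquiv (AddMonoidAlgebra.single (k, l) c) : ℝ → ℂ) =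
      fun t : ℝ => c * (t : ℂ) ^ k * exp (l * t) := by
  change powExpEval _ = _
  rw [powExpEval, AddMonoidAlgebra.lift_single]
  funext t
  exact (mul_assoc _ _ _).symm

lemma isTrigPoly_sum {ι : Type*} (s : Finset ι) (a : ι → ℂ) (l : ι → ℝ) :
    IsTrigPoly fun t => ∑ i ∈ s, a i * exp (I * l i * t) := by
  refine ⟨s.card, fun j => a (s.equivFin.symm j), fun j => l (s.equivFin.symm j),
    funext fun t => ?_⟩
  rw [← Finset.sum_coe_sort s, ← Equiv.sum_comp s.equivFin.symm]

lemma isTrigPoly_lift_oscHom (x : AddMonoidAlgebra ℂ (ℕ × ℂ)) :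
    IsTrigPoly (AddMonoidAlgebra.lift ℂ (ℝ → ℂ) (ℕ × ℂ) oscHom x) := by
  rw [AddMonoidAlgebra.lift_apply, Finsupp.sum]
  convert isTrigPoly_sum x.coeff.support x.coeff fun p => p.2.im using 1
  funext t
  simp [oscHom]

/-- There is a ring homomorphism `Ψ : B → (ℝ → ℂ)` mapping
`t ↦ c t^k e^{λ t}` to `t ↦ c e^{i Im(λ) t}`; it takes values in the generalized
trigonometric polynomials and `Ψ 1 = 1`. -/
theorem exists_Psi :
    ∃ Ψ : Bohl →+* (ℝ → ℂ),
      (∀ (c l : ℂ) (k : ℕ)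
        (h : (fun t : ℝ => c * (t : ℂ) ^ k * Complex.exp (l * t)) ∈ Bohl),
        Ψ ⟨_, h⟩ = fun t : ℝ => c * Complex.exp (Complex.I * (l.im : ℂ) * (t : ℂ))) ∧
      (∀ f : Bohl, IsTrigPoly (Ψ f)) ∧ Ψ 1 = 1 := by
  refine ⟨(AddMonoidAlgebra.lift ℂ (ℝ → ℂ) (ℕ × ℂ) oscHom).toRingHom.comp
    bohlEquiv.symm.toRingHom, fun c l k h => ?_, fun f => isTrigPoly_lift_oscHom _, map_one _⟩
  have hsymm : bohlEquiv.symm ⟨_, h⟩ = AddMonoidAlgebra.single (k, l) c :=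
    bohlEquiv.symm_apply_eq.mpr (Subtype.ext (coe_bohlEquiv_single k l c).symm)
  change AddMonoidAlgebra.lift ℂ (ℝ → ℂ) (ℕ × ℂ) oscHom (bohlEquiv.symm ⟨_, h⟩) = _
  rw [hsymm, AddMonoidAlgebra.lift_single]
  rfl
end
end

section
/- Let N and s be positive integers, and let λ_1, …, λ_{4N} be positive real numbers that are linearly independent over ℚ. For j = 1, …, 2N define f_j(t) = exp(i·s·λ_{2j−1}·t) + exp(i·s·λ_{2j}·t) − 1, and set g(t) = 1/4 − Σ_{j=1}^N f_j(t)·f_{N+j}(t). Then the (N+1)-tuple (f_1, …, f_N, g) has an inverse consisting of generalized trigonometric polynomials: there exist generalized trigonometric polynomials x_1, …, x_{N+1} with x_1·f_1 + … + x_N·f_N + x_{N+1}·g = 1 identically on ℝ. -/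
open Complex

noncomputable section

lemma isTrigPoly_aux (c d : ℝ) :
    IsTrigPoly (fun t : ℝ => 4 * (Complex.exp (Complex.I * (c : ℂ) * (t : ℂ))
      + Complex.exp (Complex.I * (d : ℂ) * (t : ℂ)) - 1)) := by
  refine ⟨3, ![4, 4, -4], ![c, d, 0], ?_⟩
  funext t
  simp [Fin.sum_univ_three]
  ring

lemma isTrigPoly_const (c : ℂ) : IsTrigPoly (fun _ : ℝ => c) := by
  refine ⟨1, ![c], ![0], ?_⟩
  funext t
  simp

/-- Given `N, s ≥ 1` and positive reals `λ₁, …, λ_{4N}` linearly independent over `ℚ`,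
the tuple `(f_1, …, f_N, g)`, where
`f_j(t) = exp(i s λ_{2j-1} t) + exp(i s λ_{2j} t) - 1` (for `j = 1, …, 2N`) and
`g = 1/4 - ∑_{j=1}^N f_j f_{N+j}`, has an inverse consisting of generalized
trigonometric polynomials. -/
theorem explicit_tuple_invertible (N s : ℕ) (hN : 0 < N) (hs : 0 < s)
    (l : Fin (4 * N) → ℝ) (hpos : ∀ i, 0 < l i) (hli : LinearIndependent ℚ l)
    (f : Fin (2 * N) → ℝ → ℂ)
    (hf : ∀ j : Fin (2 * N), f j = fun t : ℝ =>
        Complex.exp (Complex.I * ((s : ℝ) * l ⟨2 * j.1, by omega⟩ : ℝ) * (t : ℂ))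
        + Complex.exp (Complex.I * ((s : ℝ) * l ⟨2 * j.1 + 1, by omega⟩ : ℝ) * (t : ℂ)) - 1)
    (g : ℝ → ℂ)
    (hg : g = fun t : ℝ => 1 / 4 - ∑ j : Fin N,
        f ⟨j.1, by omega⟩ t * f ⟨N + j.1, by omega⟩ t) :
    ∃ (x : Fin N → ℝ → ℂ) (y : ℝ → ℂ),
      (∀ j, IsTrigPoly (x j)) ∧ IsTrigPoly y ∧
      (∑ j : Fin N, x j * f ⟨j.1, by omega⟩) + y * g = 1 := by
  refine ⟨fun j => fun t => 4 * f ⟨N + j.1, by omega⟩ t, fun _ => 4, ?_, ?_, ?_⟩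
  · intro j
    simpa only [hf] using
      isTrigPoly_aux ((s : ℝ) * l ⟨2 * (N + j.1), by omega⟩)
        ((s : ℝ) * l ⟨2 * (N + j.1) + 1, by omega⟩)
  · exact isTrigPoly_const 4
  · funext t
    simp only [Pi.add_apply, Pi.mul_apply, Pi.one_apply, Finset.sum_apply, hg]
    rw [mul_sub, Finset.mul_sum]
    have : ∀ j : Fin N, (4 : ℂ) * f ⟨N + j.1, by omega⟩ t * f ⟨j.1, by omega⟩ t
        = 4 * (f ⟨j.1, by omega⟩ t * f ⟨N + j.1, by omega⟩ t) := fun j => by ring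
    rw [Finset.sum_congr rfl fun j _ => this j]
    ring
end
end

section
/- Let f(t) = c_1·exp(i·ξ_1·t) + … + c_n·exp(i·ξ_n·t) for t ∈ ℝ, where n ≥ 1, ξ_1, …, ξ_n are distinct real numbers and c_1, …, c_n are nonzero complex numbers. Then there exist ε > 0 and a sequence (t_k)_{k ∈ ℕ} of real numbers with t_k → +∞ as k → ∞ such that |f(t_k)| ≥ ε for all k ∈ ℕ. -/
/-!
Factor out the frequency `ξ₀` and sample `f` on an arithmetic progression `m τ`, with `τ > 0`
chosen so that every other rotation `rⱼ = exp (i (ξⱼ - ξ₀) τ)` differs from `1`. Then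
`|f(m τ)| = |c₀ + ∑ⱼ cⱼ rⱼ ^ m|`, and summed over any window of `N` consecutive `m` the terms with
`rⱼ ≠ 1` are geometric sums bounded independently of `N` and of the window, while `c₀` adds up
to `N c₀`. For `N` large every window therefore contains an `m` with `|f(m τ)| ≥ |c₀| / 2`.
-/

open Complex Filter Finset Topology

lemma exp_ofReal_mul_I_ne_one {θ : ℝ} (hθ₀ : θ ≠ 0) (hθ : |θ| < 2 * Real.pi) :
    exp (θ * I) ≠ 1 := by
  intro h
  have hcos : Real.cos θ = 1 := by rw [← exp_ofReal_mul_I_re, h, one_re]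
  obtain ⟨hlow, hhigh⟩ := abs_lt.1 hθ
  exact hθ₀ ((Real.cos_eq_one_iff_of_lt_of_lt hlow hhigh).1 hcos)

lemma eventually_exp_ofReal_mul_mul_I_ne_one {a : ℝ} (ha : a ≠ 0) :
    ∀ᶠ τ in 𝓝[>] (0 : ℝ), exp (↑(a * τ) * I) ≠ 1 := by
  have hsmall : ∀ᶠ τ in 𝓝 (0 : ℝ), |a * τ| < 2 * Real.pi := by
    have hcont : Tendsto (fun τ : ℝ => a * τ) (𝓝 0) (𝓝 0) := by
      simpa using (continuous_const_mul a).tendsto 0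
    exact hcont.abs.eventually (gt_mem_nhds (by simpa using Real.two_pi_pos))
  filter_upwards [nhdsWithin_le_nhds hsmall, self_mem_nhdsWithin] with τ hτ hτpos
  exact exp_ofReal_mul_I_ne_one (mul_ne_zero ha (ne_of_gt hτpos)) hτ

lemma exists_pos_forall_exp_ofReal_mul_mul_I_ne_one {ι : Type*} [Finite ι] (a : ι → ℝ) :
    ∃ τ > 0, ∀ j, a j ≠ 0 → exp (↑(a j * τ) * I) ≠ 1 := by
  have hall : ∀ᶠ τ in 𝓝[>] (0 : ℝ), ∀ j, a j ≠ 0 → exp (↑(a j * τ) * I) ≠ 1 :=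
    eventually_all.2 fun j => by
      by_cases ha : a j = 0
      · exact Eventually.of_forall fun _ h => (h ha).elim
      · exact (eventually_exp_ofReal_mul_mul_I_ne_one ha).mono fun _ h _ => h
  exact (hall.and self_mem_nhdsWithin).exists.imp fun τ h => ⟨h.2, h.1⟩

lemma norm_geom_sum_le_of_norm_eq_one {𝕜 : Type*} [NormedField 𝕜] {r : 𝕜} (hr : ‖r‖ = 1)
    (hr₁ : r ≠ 1) (N : ℕ) : ‖∑ m ∈ range N, r ^ m‖ ≤ 2 / ‖r - 1‖ := by
  rw [geom_sum_eq hr₁, norm_div]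
  gcongr
  calc ‖r ^ N - 1‖ ≤ ‖r ^ N‖ + ‖(1 : 𝕜)‖ := norm_sub_le _ _
    _ = 2 := by rw [norm_pow, hr, one_pow, norm_one]; norm_num

section UnimodularPowerSum

variable {ι : Type*} [Fintype ι] [DecidableEq ι] (c r : ι → ℂ) (j₀ : ι)

lemma norm_sum_window_sum_mul_pow_sub_le (hr : ∀ j, ‖r j‖ = 1) (hr₀ : r j₀ = 1)
    (hr₁ : ∀ j ≠ j₀, r j ≠ 1) (M N : ℕ) :
    ‖∑ m ∈ range N, ∑ j, c j * r j ^ (M + m) - N * c j₀‖ ≤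
      ∑ j ∈ univ.erase j₀, ‖c j‖ * (2 / ‖r j - 1‖) := by
  have hsplit : ∑ m ∈ range N, ∑ j, c j * r j ^ (M + m) =
      N * c j₀ + ∑ j ∈ univ.erase j₀, c j * r j ^ M * ∑ m ∈ range N, r j ^ m := by
    simp_rw [Finset.sum_comm (s := range N), pow_add, ← mul_assoc, ← Finset.mul_sum]
    rw [← add_sum_erase _ _ (mem_univ j₀), hr₀]
    simp [mul_comm]
  rw [hsplit, add_sub_cancel_left]
  refine (norm_sum_le _ _).trans (sum_le_sum fun j hj => ?_)
  rw [norm_mul, norm_mul, norm_pow, hr, one_pow, mul_one]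
  gcongr
  exact norm_geom_sum_le_of_norm_eq_one (hr j) (hr₁ j (ne_of_mem_erase hj)) N

theorem frequently_le_norm_sum_mul_pow (hr : ∀ j, ‖r j‖ = 1) (hr₀ : r j₀ = 1)
    (hr₁ : ∀ j ≠ j₀, r j ≠ 1) {ε : ℝ} (hε : ε < ‖c j₀‖) :
    ∃ᶠ m in atTop, ε ≤ ‖∑ j, c j * r j ^ m‖ := by
  set B := ∑ j ∈ univ.erase j₀, ‖c j‖ * (2 / ‖r j - 1‖)
  obtain ⟨N, hN⟩ := exists_nat_gt (B / (‖c j₀‖ - ε))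
  have hBN : B < N * (‖c j₀‖ - ε) := (div_lt_iff₀ (sub_pos.2 hε)).1 hN
  rw [frequently_atTop]
  intro M
  by_contra! hsmall
  set S := ∑ m ∈ range N, ∑ j, c j * r j ^ (M + m)
  have hS : ‖S‖ ≤ N * ε := by
    refine (norm_sum_le _ _).trans ?_
    simpa using sum_le_sum fun m (_ : m ∈ range N) => (hsmall (M + m) (by omega)).le
  have hwindow := norm_sum_window_sum_mul_pow_sub_le c r j₀ hr hr₀ hr₁ M N
  have hcentral : (N : ℝ) * ‖c j₀‖ ≤ ‖S‖ + ‖S - N * c j₀‖ := by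
    simpa using norm_sub_le S (S - N * c j₀)
  linarith

end UnimodularPowerSum

lemma norm_sum_mul_exp_eq_norm_sum_mul_pow {ι : Type*} [Fintype ι] (c : ι → ℂ) (ξ : ι → ℝ)
    (j₀ : ι) (τ : ℝ) (m : ℕ) :
    ‖∑ j, c j * exp (I * ξ j * ↑(m * τ))‖ =
      ‖∑ j, c j * exp (↑((ξ j - ξ j₀) * τ) * I) ^ m‖ := by
  have hfactor : ∑ j, c j * exp (I * ξ j * ↑(m * τ)) =
      exp (↑(ξ j₀ * (m * τ)) * I) * ∑ j, c j * exp (↑((ξ j - ξ j₀) * τ) * I) ^ m := by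
    rw [Finset.mul_sum]
    refine sum_congr rfl fun j _ => ?_
    rw [← exp_nat_mul, mul_left_comm, ← exp_add]
    congr 2
    push_cast
    ring
  rw [hfactor, norm_mul, norm_exp_ofReal_mul_I, one_mul]

/-- If `f(t) = c₁ e^{i ξ₁ t} + … + c_n e^{i ξ_n t}` with `n ≥ 1`, distinct real
frequencies `ξⱼ` and nonzero coefficients `cⱼ`, then there are `ε > 0` and a sequence
`t_k → +∞` with `|f(t_k)| ≥ ε` for all `k`. -/
theorem trigPoly_large_along_sequence (n : ℕ) (hn : 0 < n)
    (ξ : Fin n → ℝ) (c : Fin n → ℂ)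
    (hξ : Function.Injective ξ) (hc : ∀ j, c j ≠ 0) :
    ∃ ε : ℝ, 0 < ε ∧
      ∃ t : ℕ → ℝ, Filter.Tendsto t Filter.atTop Filter.atTop ∧
        ∀ k : ℕ, ε ≤ ‖∑ j, c j * Complex.exp (Complex.I * (ξ j : ℂ) * (t k : ℂ))‖ := by
  let j₀ : Fin n := ⟨0, hn⟩
  obtain ⟨τ, hτ, hτ₁⟩ := exists_pos_forall_exp_ofReal_mul_mul_I_ne_one fun j => ξ j - ξ j₀
  have hc₀ : 0 < ‖c j₀‖ := norm_pos_iff.2 (hc j₀)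
  have hfreq := frequently_le_norm_sum_mul_pow c (fun j => exp (↑((ξ j - ξ j₀) * τ) * I)) j₀
    (fun _ => norm_exp_ofReal_mul_I _) (by simp)
    (fun j hj => hτ₁ j (sub_ne_zero.2 (hξ.ne hj))) (half_lt_self hc₀)
  obtain ⟨φ, hφ, hφ_large⟩ := extraction_of_frequently_atTop hfreq
  refine ⟨‖c j₀‖ / 2, half_pos hc₀, fun k => φ k * τ, ?_, fun k => ?_⟩
  · exact (tendsto_natCast_atTop_atTop.comp hφ.tendsto_atTop).atTop_mul_const hτ
  · rw [norm_sum_mul_exp_eq_norm_sum_mul_pow c ξ j₀]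
    exact hφ_large k
end

section
/- Every element of the Bohl algebra B that is bounded on ℝ is a generalized trigonometric polynomial; in particular every bounded element of B belongs to AP. -/
open Complex

noncomputable section

/-- Membership in AP: the sup-norm closure, inside bounded continuous functions `ℝ → ℂ`,
of the set of generalized trigonometric polynomials. -/
def APMem (f : ℝ → ℂ) : Prop :=
  Continuous f ∧ (∃ M : ℝ, ∀ t : ℝ, ‖f t‖ ≤ M) ∧
    ∀ ε : ℝ, 0 < ε → ∃ p : ℝ → ℂ, IsTrigPoly p ∧ ∀ t : ℝ, ‖f t - p t‖ ≤ ε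

/-!
Write `f t = ∑_λ P_λ(t) e^{λ t}` with distinct exponents `λ`. The operator
`g ↦ g (· + s) - e^{μ s} g` preserves boundedness and acts on each coefficient separately:
for `μ = λ₁` it lowers the degree of `P_{λ₁}`, while for `λ₀` with `e^{λ₀ s} ≠ e^{λ₁ s}` it
keeps the degree of `P_{λ₀}`. Iterating isolates a bounded single term `Q(t) e^{λ₀ t}` with
`deg Q = deg P_{λ₀}`, and such a term is bounded only if `Re λ₀ = 0` and `Q` is constant.
-/

open Polynomial Filter

namespace Polynomial

theorem degree_taylor_sub_lt {R : Type*} [CommRing R] {p : R[X]} (hp : p ≠ 0) (r : R) :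
    (taylor r p - p).degree < p.degree :=
  degree_taylor p r ▸
    degree_sub_lt_left (degree_taylor p r) (mt (taylor_eq_zero r p).1 hp) (leadingCoeff_taylor r p)

theorem degree_smul_taylor_sub_smul {K : Type*} [Field K] {a b : K} (hab : a ≠ b) (p : K[X])
    (r : K) : (a • taylor r p - b • p).degree = p.degree := by
  rcases eq_or_ne p 0 with rfl | hp
  · simp
  have hsplit : a • taylor r p - b • p = C (a - b) * p + a • (taylor r p - p) := by
    rw [← smul_eq_C_mul, sub_smul, smul_sub]; abel
  have hdeg : (C (a - b) * p).degree = p.degree := degree_C_mul (sub_ne_zero.2 hab)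
  rw [hsplit, degree_add_eq_left_of_degree_lt, hdeg]
  exact hdeg ▸ (degree_smul_le a _).trans_lt (degree_taylor_sub_lt hp r)

theorem exists_pos_eventually_le_norm_eval {𝕜 α : Type*} [NormedField 𝕜] {p : 𝕜[X]}
    (hp : p ≠ 0) {l : Filter α} {z : α → 𝕜} (hz : Tendsto (fun x => ‖z x‖) l atTop) :
    ∃ c > 0, ∀ᶠ x in l, c ≤ ‖p.eval (z x)‖ := by
  by_cases hd : 0 < p.degree
  · exact ⟨1, one_pos, (p.tendsto_norm_atTop hd hz).eventually_ge_atTop 1⟩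
  · rw [eq_C_of_degree_le_zero (not_lt.1 hd)] at hp ⊢
    exact ⟨_, norm_pos_iff.2 (C_ne_zero.1 hp), Eventually.of_forall fun x => by simp⟩

end Polynomial

theorem Filter.not_tendsto_atTop_of_forall_le {α : Type*} {l : Filter α} [l.NeBot]
    {g : α → ℝ} {C : ℝ} (hg : ∀ x, g x ≤ C) : ¬ Tendsto g l atTop := fun h =>
  let ⟨x, hx⟩ := (h.eventually_gt_atTop C).exists
  (hg x).not_gt hx

theorem Complex.exists_exp_mul_ofReal_ne {l₀ l₁ : ℂ} (h : l₀ ≠ l₁) :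
    ∃ s : ℝ, exp (l₀ * s) ≠ exp (l₁ * s) := by
  have hμ : ‖l₀ - l₁‖ ≠ 0 := norm_ne_zero_iff.2 (sub_ne_zero.2 h)
  refine ⟨‖l₀ - l₁‖⁻¹, fun heq => ?_⟩
  obtain ⟨n, hn⟩ := exp_eq_exp_iff_exists_int.1 heq
  -- `(l₀ - l₁) s` has norm `1`, which is not a multiple of `2π`
  have hnorm : ‖((l₀ - l₁) * (‖l₀ - l₁‖⁻¹ : ℝ) : ℂ)‖ = 1 := by
    rw [norm_mul, norm_real, Real.norm_eq_abs, abs_inv, abs_norm, mul_inv_cancel₀ hμ]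
  rw [sub_mul, hn, add_sub_cancel_left, norm_mul, norm_intCast] at hnorm
  have h2pi : ‖(2 * Real.pi * I : ℂ)‖ = 2 * Real.pi := by simp [Real.pi_pos.le]
  rw [h2pi] at hnorm
  rcases eq_or_ne n 0 with rfl | hn0
  · simp at hnorm
  · have : (1 : ℝ) ≤ |(n : ℝ)| := by exact_mod_cast Int.one_le_abs hn0
    nlinarith [Real.pi_gt_three]

namespace Bohl

def expPoly (F : Finset ℂ) (P : ℂ → ℂ[X]) (t : ℝ) : ℂ :=
  ∑ l ∈ F, (P l).eval (t : ℂ) * exp (l * t)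

theorem expPoly_add_expPoly (F G : Finset ℂ) (P Q : ℂ → ℂ[X]) :
    expPoly F P + expPoly G Q =
      expPoly (F ∪ G) (fun l => (if l ∈ F then P l else 0) + if l ∈ G then Q l else 0) := by
  funext t
  simp only [Pi.add_apply, expPoly, eval_add, apply_ite (eval (t : ℂ)), eval_zero, add_mul,
    ite_mul, zero_mul, Finset.sum_add_distrib, Finset.sum_ite_mem,
    Finset.union_inter_cancel_left, Finset.union_inter_cancel_right]

theorem smul_expPoly (a : ℂ) (F : Finset ℂ) (P : ℂ → ℂ[X]) :
    a • expPoly F P = expPoly F (fun l => C a * P l) := by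
  funext t
  simp only [Pi.smul_apply, smul_eq_mul, expPoly, Finset.mul_sum, eval_mul, eval_C, mul_assoc]

theorem exists_expPoly_eq_of_mem {f : ℝ → ℂ} (hf : f ∈ Bohl) :
    ∃ (F : Finset ℂ) (P : ℂ → ℂ[X]), f = expPoly F P := by
  set S := {g : ℝ → ℂ | ∃ (k : ℕ) (l : ℂ), g = fun t : ℝ => (t : ℂ) ^ k * exp (l * t)}
  have hS : ∀ g ∈ Submonoid.closure S, g ∈ S := fun g hg => by
    induction hg using Submonoid.closure_induction with
    | mem g hg => exact hg
    | one => exact ⟨0, 0, by simp [Pi.one_def]⟩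
    | mul g h _ _ hg hh =>
      obtain ⟨⟨k, l, rfl⟩, ⟨k', l', rfl⟩⟩ := And.intro hg hh
      refine ⟨k + k', l + l', funext fun t => ?_⟩
      simp only [Pi.mul_apply, pow_add, add_mul, Complex.exp_add]
      ring
  have hspan : f ∈ Submodule.span ℂ (Submonoid.closure S : Set (ℝ → ℂ)) := by
    rw [← Algebra.adjoin_eq_span]
    exact hf
  clear hf
  induction hspan using Submodule.span_induction with
  | mem g hg =>
    obtain ⟨k, l, rfl⟩ := hS g hg
    exact ⟨{l}, fun _ => X ^ k, funext fun t => by simp [expPoly]⟩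
  | zero => exact ⟨∅, 0, funext fun t => by simp [expPoly]⟩
  | add g h _ _ hg hh =>
    obtain ⟨⟨F, P, rfl⟩, ⟨G, Q, rfl⟩⟩ := And.intro hg hh
    exact ⟨_, _, expPoly_add_expPoly F G P Q⟩
  | smul a g _ hg =>
    obtain ⟨F, P, rfl⟩ := hg
    exact ⟨_, _, smul_expPoly a F P⟩

theorem norm_eval_mul_exp (p : ℂ[X]) (l : ℂ) (t : ℝ) :
    ‖p.eval (t : ℂ) * exp (l * t)‖ = ‖p.eval (t : ℂ)‖ * Real.exp (l.re * t) := by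
  rw [norm_mul, norm_exp, re_mul_ofReal]

theorem tendsto_norm_eval_mul_exp {L : Filter ℝ} (hL : Tendsto (fun t : ℝ => |t|) L atTop)
    {p : ℂ[X]} (hp : p ≠ 0) {l : ℂ} (hl : Tendsto (fun t => l.re * t) L atTop) :
    Tendsto (fun t : ℝ => ‖p.eval (t : ℂ) * exp (l * t)‖) L atTop := by
  obtain ⟨c, hc, hev⟩ := exists_pos_eventually_le_norm_eval hp (z := fun t : ℝ => (t : ℂ))
    (by simpa only [norm_real, Real.norm_eq_abs] using hL)
  refine tendsto_atTop_mono' L (hev.mono fun t ht => ?_)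
    ((Real.tendsto_exp_atTop.comp hl).const_mul_atTop hc)
  simpa only [Function.comp_apply, norm_eval_mul_exp]
    using mul_le_mul_of_nonneg_right ht (Real.exp_pos (l.re * t)).le

theorem re_eq_zero_and_natDegree_eq_zero_of_bounded {p : ℂ[X]} (hp : p ≠ 0) {l : ℂ}
    {C : ℝ} (hC : ∀ t : ℝ, ‖p.eval (t : ℂ) * exp (l * t)‖ ≤ C) :
    l.re = 0 ∧ p.natDegree = 0 := by
  have hre : l.re = 0 := by
    rcases lt_trichotomy l.re 0 with hneg | hzero | hpos
    · exact absurd (tendsto_norm_eval_mul_exp tendsto_abs_atBot_atTop hp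
        (tendsto_id.const_mul_atBot_of_neg hneg)) (not_tendsto_atTop_of_forall_le hC)
    · exact hzero
    · exact absurd (tendsto_norm_eval_mul_exp tendsto_abs_atTop_atTop hp
        (tendsto_id.const_mul_atTop hpos)) (not_tendsto_atTop_of_forall_le hC)
  refine ⟨hre, natDegree_eq_zero_iff_degree_le_zero.2 (not_lt.1 fun hdeg => ?_)⟩
  refine not_tendsto_atTop_of_forall_le (l := atTop) (C := C) (fun t => ?_)
    (p.tendsto_norm_atTop hdeg (z := fun t : ℝ => (t : ℂ)) ?_)
  · simpa only [norm_eval_mul_exp, hre, zero_mul, Real.exp_zero, mul_one] using hC t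
  · simpa only [norm_real, Real.norm_eq_abs] using tendsto_abs_atTop_atTop

theorem expPoly_add_sub_mul (F : Finset ℂ) (P : ℂ → ℂ[X]) (s : ℝ) (c : ℂ) (t : ℝ) :
    expPoly F P (t + s) - c * expPoly F P t =
      expPoly F (fun l => exp (l * s) • taylor (s : ℂ) (P l) - c • P l) t := by
  simp only [expPoly, Finset.mul_sum, ← Finset.sum_sub_distrib, eval_sub, eval_smul,
    taylor_eval, smul_eq_mul, ofReal_add, mul_add, exp_add]
  refine Finset.sum_congr rfl fun l _ => ?_
  ring

theorem exists_bound_add_sub_mul {g : ℝ → ℂ} {C : ℝ} (hC : ∀ t, ‖g t‖ ≤ C) (s : ℝ) (c : ℂ) :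
    ∃ C', ∀ t, ‖g (t + s) - c * g t‖ ≤ C' :=
  ⟨C + ‖c‖ * C, fun t => (norm_sub_le _ _).trans <|
    add_le_add (hC _) (norm_mul c (g t) ▸ mul_le_mul_of_nonneg_left (hC t) (norm_nonneg c))⟩

/-- Witnessed by the difference operator `g ↦ g (· + s) - e^{l₁ s} g` for an `s` with
`e^{l₀ s} ≠ e^{l₁ s}`. -/
theorem exists_bounded_expPoly_degree_lt {F : Finset ℂ} {P : ℂ → ℂ[X]} {l₀ l₁ : ℂ}
    (h01 : l₀ ≠ l₁) (hP : P l₁ ≠ 0) (hb : ∃ C, ∀ t, ‖expPoly F P t‖ ≤ C) :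
    ∃ P' : ℂ → ℂ[X], (∃ C, ∀ t, ‖expPoly F P' t‖ ≤ C) ∧
      (P' l₁).degree < (P l₁).degree ∧ (P' l₀).degree = (P l₀).degree := by
  obtain ⟨s, hs⟩ := exists_exp_mul_ofReal_ne h01
  obtain ⟨C, hC⟩ := hb
  refine ⟨fun l => exp (l * s) • taylor (s : ℂ) (P l) - exp (l₁ * s) • P l, ?_, ?_,
    degree_smul_taylor_sub_smul hs _ _⟩
  · simpa only [expPoly_add_sub_mul] using exists_bound_add_sub_mul hC s (exp (l₁ * s))
  · change (exp (l₁ * s) • taylor (s : ℂ) (P l₁) - exp (l₁ * s) • P l₁).degree < _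
    rw [← smul_sub]
    exact (degree_smul_le _ _).trans_lt (degree_taylor_sub_lt hP _)

theorem exists_bounded_expPoly_of_insert {G : Finset ℂ} {l₀ l₁ : ℂ} (h01 : l₀ ≠ l₁)
    (hl₁ : l₁ ∉ G) (P : ℂ → ℂ[X]) (hb : ∃ C, ∀ t, ‖expPoly (insert l₁ G) P t‖ ≤ C) :
    ∃ P' : ℂ → ℂ[X], (∃ C, ∀ t, ‖expPoly G P' t‖ ≤ C) ∧ (P' l₀).degree = (P l₀).degree := by
  by_cases hP : P l₁ = 0
  · exact ⟨P, by simpa [expPoly, Finset.sum_insert hl₁, hP] using hb, rfl⟩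
  · obtain ⟨P', hb', hlt, hdeg⟩ := exists_bounded_expPoly_degree_lt h01 hP hb
    obtain ⟨P'', hb'', hdeg'⟩ := exists_bounded_expPoly_of_insert h01 hl₁ P' hb'
    exact ⟨P'', hb'', hdeg'.trans hdeg⟩
termination_by P l₁ -- `ℂ[X]` is well-founded by degree

theorem exists_bounded_eval_mul_exp {F : Finset ℂ} {P : ℂ → ℂ[X]} {l₀ : ℂ} (hl₀ : l₀ ∈ F)
    (hb : ∃ C, ∀ t, ‖expPoly F P t‖ ≤ C) :
    ∃ Q : ℂ[X], Q.degree = (P l₀).degree ∧ ∃ C, ∀ t : ℝ, ‖Q.eval (t : ℂ) * exp (l₀ * t)‖ ≤ C := by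
  suffices ∀ G : Finset ℂ, l₀ ∉ G → ∀ P : ℂ → ℂ[X], (∃ C, ∀ t, ‖expPoly (insert l₀ G) P t‖ ≤ C) →
      ∃ Q : ℂ[X], Q.degree = (P l₀).degree ∧ ∃ C, ∀ t : ℝ, ‖Q.eval (t : ℂ) * exp (l₀ * t)‖ ≤ C from
    this _ (Finset.notMem_erase l₀ F) P (by rwa [Finset.insert_erase hl₀])
  intro G
  induction G using Finset.induction_on with
  | empty => exact fun _ P hb => ⟨P l₀, rfl, by simpa [expPoly] using hb⟩
  | insert l₁ G hl₁ ih =>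
    intro hl₀G P hb
    have h01 : l₀ ≠ l₁ := fun h => hl₀G (h ▸ Finset.mem_insert_self l₀ G)
    rw [Finset.insert_comm] at hb
    obtain ⟨P', hb', hdeg⟩ :=
      exists_bounded_expPoly_of_insert h01 (by simp [hl₁, h01.symm]) P hb
    obtain ⟨Q, hQ, hbQ⟩ := ih (fun h => hl₀G (Finset.mem_insert_of_mem h)) P' hb'
    exact ⟨Q, hQ.trans hdeg, hbQ⟩

theorem re_eq_zero_and_natDegree_eq_zero_of_bounded_expPoly {F : Finset ℂ} {P : ℂ → ℂ[X]}
    (hb : ∃ C, ∀ t, ‖expPoly F P t‖ ≤ C) {l : ℂ} (hl : l ∈ F) (hP : P l ≠ 0) :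
    l.re = 0 ∧ (P l).natDegree = 0 := by
  obtain ⟨Q, hQ, C, hC⟩ := exists_bounded_eval_mul_exp hl hb
  have hQ0 : Q ≠ 0 := fun h => hP (degree_eq_bot.1 (hQ ▸ h ▸ degree_zero))
  obtain ⟨hre, hdeg⟩ := re_eq_zero_and_natDegree_eq_zero_of_bounded hQ0 hC
  exact ⟨hre, natDegree_eq_of_degree_eq hQ ▸ hdeg⟩

theorem expPoly_eq_sum_exp_I_mul {F : Finset ℂ} {P : ℂ → ℂ[X]}
    (h : ∀ l ∈ F, P l ≠ 0 → l.re = 0 ∧ (P l).natDegree = 0) (t : ℝ) :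
    expPoly F P t = ∑ l ∈ F, (P l).coeff 0 * exp (I * (l.im : ℂ) * t) := by
  refine Finset.sum_congr rfl fun l hl => ?_
  by_cases hP : P l = 0
  · simp [hP]
  obtain ⟨hre, hdeg⟩ := h l hl hP
  have hl_eq : l = I * l.im := Complex.ext (by simp [hre]) (by simp)
  rw [eq_C_of_natDegree_eq_zero hdeg, eval_C, coeff_C_zero, ← hl_eq]

end Bohl

theorem isTrigPoly_finset_sum {ι : Type*} (F : Finset ι) (a : ι → ℂ) (b : ι → ℝ) :
    IsTrigPoly fun t => ∑ i ∈ F, a i * exp (I * (b i : ℂ) * t) :=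
  ⟨F.card, fun j => a (F.equivFin.symm j), fun j => b (F.equivFin.symm j), funext fun t =>
    ((Finset.sum_coe_sort F _).symm.trans
      (F.equivFin.symm.sum_comp fun i : F => a i * exp (I * (b i : ℂ) * t)).symm)⟩

theorem IsTrigPoly.continuous {f : ℝ → ℂ} (hf : IsTrigPoly f) : Continuous f := by
  obtain ⟨N, a, l, rfl⟩ := hf
  fun_prop

theorem IsTrigPoly.exists_bound {f : ℝ → ℂ} (hf : IsTrigPoly f) : ∃ M, ∀ t, ‖f t‖ ≤ M := by
  obtain ⟨N, a, l, rfl⟩ := hf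
  refine ⟨∑ j, ‖a j‖, fun t => (norm_sum_le _ _).trans (Finset.sum_le_sum fun j _ => ?_)⟩
  rw [norm_mul, mul_assoc, ← ofReal_mul, norm_exp_I_mul_ofReal, mul_one]

theorem IsTrigPoly.apMem {f : ℝ → ℂ} (hf : IsTrigPoly f) : APMem f :=
  ⟨hf.continuous, hf.exists_bound, fun _ hε => ⟨f, hf, fun t => by simpa using hε.le⟩⟩

/-- Every element of the Bohl algebra that is bounded on `ℝ` is a generalized
trigonometric polynomial; in particular it belongs to AP. -/
theorem bounded_bohl_is_trigPoly (f : ℝ → ℂ) (hf : f ∈ Bohl)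
    (hbd : ∃ M : ℝ, ∀ t : ℝ, ‖f t‖ ≤ M) :
    IsTrigPoly f ∧ APMem f := by
  obtain ⟨F, P, rfl⟩ := Bohl.exists_expPoly_eq_of_mem hf
  have hF : ∀ l ∈ F, P l ≠ 0 → l.re = 0 ∧ (P l).natDegree = 0 := fun l hl hP =>
    Bohl.re_eq_zero_and_natDegree_eq_zero_of_bounded_expPoly hbd hl hP
  have htrig : IsTrigPoly (Bohl.expPoly F P) := by
    simpa only [← funext (Bohl.expPoly_eq_sum_exp_I_mul hF)] using
      isTrigPoly_finset_sum F (fun l => (P l).coeff 0) fun l => l.im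
  exact ⟨htrig, htrig.apMem⟩
end
end

section
/- The invertible elements of the Bohl algebra B are exactly the functions t ↦ c·exp(λ·t) with c ∈ ℂ \ {0} and λ ∈ ℂ. That is, f ∈ B is a unit of B (there exists g ∈ B with f·g = 1 pointwise on ℝ) if and only if f(t) = c·exp(λ·t) for some nonzero complex number c and some λ ∈ ℂ. -/
/-!
Evaluation `∑ p_λ(X) e^{λX} ↦ (t ↦ ∑ p_λ(t) e^{λt})` identifies the group algebra `ℂ[X][ℂ]`
with the Bohl algebra: it is onto by construction and injective because the functions
`t^k e^{λt}` are linearly independent. The group `(ℂ, +)` is a `ℚ`-vector space, hence has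
`TwoUniqueSums`; in a product `F * G = 1` over the domain `ℂ[X]` every uniquely attained sum of
exponents carries a nonzero coefficient and so must be `0`, which forces both supports to be
singletons. So the units are the monomials `c e^{λX}` with `c` a unit of `ℂ[X]`, i.e. `c ∈ ℂˣ`.
-/

open Complex

noncomputable section

theorem Function.Injective.isUnit_iff_exists_mem_range_mul_eq_one {M N F : Type*} [Monoid M]
    [IsDedekindFiniteMonoid M] [Monoid N] [FunLike F M N] [MonoidHomClass F M N] {φ : F}
    (hφ : Function.Injective φ) {a : M} : IsUnit a ↔ ∃ g ∈ Set.range φ, φ a * g = 1 := by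
  constructor
  · rintro ⟨u, rfl⟩
    exact ⟨φ ↑u⁻¹, ⟨_, rfl⟩, by rw [← map_mul, Units.mul_inv, map_one]⟩
  · rintro ⟨_, ⟨b, rfl⟩, hab⟩
    exact IsUnit.of_mul_eq_one b (hφ (by rwa [map_mul, map_one]))

namespace AddMonoidAlgebra

open Finset

variable {R G : Type*} [Semiring R] [NoZeroDivisors R]

theorem add_eq_zero_of_mul_eq_one_of_uniqueAdd [AddZeroClass G] {F H : AddMonoidAlgebra R G}
    (hFH : F * H = 1) {a b : G} (ha : a ∈ F.coeff.support) (hb : b ∈ H.coeff.support)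
    (h : UniqueAdd F.coeff.support H.coeff.support a b) :
    a + b = 0 ∧ F.coeff a * H.coeff b = 1 := by
  classical
  have hcoeff := coeff_mul_add_of_uniqueAdd h
  rw [hFH, one_def, coeff_single, Finsupp.single_apply] at hcoeff
  split_ifs at hcoeff with h0
  · exact ⟨h0.symm, hcoeff.symm⟩
  · exact absurd hcoeff.symm <|
      mul_ne_zero (Finsupp.mem_support_iff.mp ha) (Finsupp.mem_support_iff.mp hb)

theorem card_support_eq_one_of_mul_eq_one [Nontrivial R] [AddZeroClass G] [TwoUniqueSums G]
    {F H : AddMonoidAlgebra R G} (hFH : F * H = 1) :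
    #F.coeff.support = 1 ∧ #H.coeff.support = 1 := by
  have hF : F.coeff.support.Nonempty := by
    simpa [Finsupp.support_nonempty_iff] using left_ne_zero_of_mul_eq_one hFH
  have hH : H.coeff.support.Nonempty := by
    simpa [Finsupp.support_nonempty_iff] using right_ne_zero_of_mul_eq_one hFH
  have hcard : #F.coeff.support * #H.coeff.support ≤ 1 := by
    by_contra! hlt
    obtain ⟨p, hp, q, hq, hpq, hup, huq⟩ := TwoUniqueSums.uniqueAdd_of_one_lt_card hlt
    rw [mem_product] at hp hq
    have hp0 := (add_eq_zero_of_mul_eq_one_of_uniqueAdd hFH hp.1 hp.2 hup).1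
    have hq0 := (add_eq_zero_of_mul_eq_one_of_uniqueAdd hFH hq.1 hq.2 huq).1
    obtain ⟨h1, h2⟩ := hup hq.1 hq.2 (hq0.trans hp0.symm)
    exact hpq (Prod.ext h1 h2).symm
  have hFpos := hF.card_pos
  have hHpos := hH.card_pos
  constructor <;> nlinarith

theorem isUnit_iff_exists_single [Nontrivial R] [AddGroup G] [TwoUniqueSums G]
    {F : AddMonoidAlgebra R G} :
    IsUnit F ↔ ∃ a r, IsUnit r ∧ F = single a r := by
  constructor
  · rintro ⟨⟨F, H, hFH, hHF⟩, rfl⟩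
    obtain ⟨hF, hH⟩ := card_support_eq_one_of_mul_eq_one hFH
    obtain ⟨a, ha⟩ := card_eq_one.mp hF
    obtain ⟨b, hb⟩ := card_eq_one.mp hH
    have hab : UniqueAdd F.coeff.support H.coeff.support a b := by
      intro a' b' ha' hb' _; simp_all
    have hba : UniqueAdd H.coeff.support F.coeff.support b a := by
      intro b' a' hb' ha' _; simp_all
    have hFH' := (add_eq_zero_of_mul_eq_one_of_uniqueAdd hFH (by simp [ha]) (by simp [hb]) hab).2
    have hHF' := (add_eq_zero_of_mul_eq_one_of_uniqueAdd hHF (by simp [hb]) (by simp [ha]) hba).2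
    refine ⟨a, F.coeff a, ⟨⟨_, _, hFH', hHF'⟩, rfl⟩, ?_⟩
    rw [← coeff_inj, coeff_single, ← Finsupp.support_eq_singleton.mp ha |>.2]
  · rintro ⟨a, r, ⟨u, rfl⟩, rfl⟩
    exact ⟨⟨single a ↑u, single (-a) ↑u⁻¹, by simp [one_def], by simp [one_def]⟩, rfl⟩

end AddMonoidAlgebra

namespace Polynomial

variable {R : Type*} [Semiring R] [NoZeroDivisors R]

theorem derivative_add_C_mul_ne_zero {c : R} (hc : c ≠ 0) {q : R[X]} (hq : q ≠ 0) :
    derivative q + C c * q ≠ 0 := by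
  intro h
  have hcoeff : (derivative q + C c * q).coeff q.natDegree = c * q.leadingCoeff := by
    rw [coeff_add, coeff_C_mul, coeff_derivative, coeff_natDegree_succ_eq_zero, zero_mul,
      zero_add, leadingCoeff]
  rw [h, coeff_zero] at hcoeff
  exact mul_ne_zero hc (leadingCoeff_ne_zero.mpr hq) hcoeff.symm

theorem iterate_derivative_add_C_mul_ne_zero {c : R} (hc : c ≠ 0) {q : R[X]} (hq : q ≠ 0)
    (k : ℕ) : (fun q => derivative q + C c * q)^[k] q ≠ 0 := by
  induction k with
  | zero => exact hq
  | succ k ih =>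
    rw [Function.iterate_succ_apply']
    exact derivative_add_C_mul_ne_zero hc ih

theorem eq_zero_of_forall_eval_ofReal_eq_zero {p : ℂ[X]} (h : ∀ t : ℝ, p.eval (t : ℂ) = 0) :
    p = 0 :=
  eq_zero_of_infinite_isRoot p <|
    (Set.infinite_range_of_injective ofReal_injective).mono (Set.range_subset_iff.mpr h)

end Polynomial

open Polynomial

theorem hasDerivAt_eval_mul_exp (p : ℂ[X]) (l : ℂ) (t : ℝ) :
    HasDerivAt (fun t : ℝ => p.eval (t : ℂ) * exp (l * t))
      ((derivative p + C l * p).eval (t : ℂ) * exp (l * t)) t := by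
  have hp : HasDerivAt (fun t : ℝ => p.eval (t : ℂ)) ((derivative p).eval (t : ℂ)) t :=
    (p.hasDerivAt (t : ℂ)).comp_ofReal
  have hexp : HasDerivAt (fun t : ℝ => exp (l * t)) (exp (l * t) * l) t :=
    (((hasDerivAt_id (t : ℂ)).const_mul l).cexp.comp_ofReal).congr_deriv (by simp)
  exact (hp.mul hexp).congr_deriv (by rw [eval_add, eval_mul, eval_C]; ring)

/-- Applying `d/dt - μ` to `∑ p_l(t) e^{l t}` replaces each `p_l` by `p_l' + (l - μ) p_l`. -/
theorem sum_eval_mul_exp_derivative_eq_zero {s : Finset ℂ} {p : ℂ → ℂ[X]}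
    (h : ∀ t : ℝ, ∑ l ∈ s, (p l).eval (t : ℂ) * exp (l * t) = 0) (μ : ℂ) (t : ℝ) :
    ∑ l ∈ s, (derivative (p l) + C (l - μ) * p l).eval (t : ℂ) * exp (l * t) = 0 := by
  have hderiv := HasDerivAt.fun_sum (u := s) fun l _ => hasDerivAt_eval_mul_exp (p l) l t
  rw [show (fun t : ℝ => ∑ l ∈ s, (p l).eval (t : ℂ) * exp (l * t)) = fun _ => 0 from
    funext h] at hderiv
  calc ∑ l ∈ s, (derivative (p l) + C (l - μ) * p l).eval (t : ℂ) * exp (l * t)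
      = ∑ l ∈ s, (derivative (p l) + C l * p l).eval (t : ℂ) * exp (l * t)
          - μ * ∑ l ∈ s, (p l).eval (t : ℂ) * exp (l * t) := by
        rw [Finset.mul_sum, ← Finset.sum_sub_distrib]
        refine Finset.sum_congr rfl fun l _ => ?_
        simp only [eval_add, eval_mul, eval_C]
        ring
    _ = 0 := by rw [hderiv.unique (hasDerivAt_const t 0), h t, mul_zero, sub_zero]

theorem sum_eval_mul_exp_iterate_eq_zero {s : Finset ℂ} {p : ℂ → ℂ[X]}
    (h : ∀ t : ℝ, ∑ l ∈ s, (p l).eval (t : ℂ) * exp (l * t) = 0) (μ : ℂ) (k : ℕ) (t : ℝ) :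
    ∑ l ∈ s, ((fun q => derivative q + C (l - μ) * q)^[k] (p l)).eval (t : ℂ) * exp (l * t)
      = 0 := by
  induction k generalizing t with
  | zero => exact h t
  | succ k ih =>
    simp only [Function.iterate_succ_apply']
    exact sum_eval_mul_exp_derivative_eq_zero ih μ t

theorem eq_zero_of_sum_eval_mul_exp_eq_zero (s : Finset ℂ) {p : ℂ → ℂ[X]}
    (h : ∀ t : ℝ, ∑ l ∈ s, (p l).eval (t : ℂ) * exp (l * t) = 0) : ∀ l ∈ s, p l = 0 := by
  induction s using Finset.strongInduction generalizing p with
  | _ s ih =>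
  intro μ hμ
  -- `(d/dt - μ)^k` with `k > deg p_μ` kills the `μ`-term and keeps the others nonzero.
  set k := (p μ).natDegree + 1
  set q : ℂ → ℂ[X] := fun l => (fun q => derivative q + C (l - μ) * q)^[k] (p l)
  have hqμ : q μ = 0 := by
    have hD : (fun q : ℂ[X] => derivative q + C (μ - μ) * q) = derivative := by
      ext1 q; simp
    simp only [q, hD]
    exact iterate_derivative_eq_zero (Nat.lt_succ_self _)
  have hq : ∀ t : ℝ, ∑ l ∈ s.erase μ, (q l).eval (t : ℂ) * exp (l * t) = 0 := fun t => by
    rw [Finset.sum_erase _ (by simp [hqμ])]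
    exact sum_eval_mul_exp_iterate_eq_zero h μ k t
  have hp : ∀ l ∈ s, l ≠ μ → p l = 0 := fun l hl hne => by
    by_contra hpl
    exact iterate_derivative_add_C_mul_ne_zero (sub_ne_zero.mpr hne) hpl k
      (ih _ (Finset.erase_ssubset hμ) hq l (Finset.mem_erase.mpr ⟨hne, hl⟩))
  refine eq_zero_of_forall_eval_ofReal_eq_zero fun t => ?_
  have ht := h t
  rw [Finset.sum_eq_single_of_mem μ hμ fun l hl hne => by simp [hp l hl hne]] at ht
  exact (mul_eq_zero.mp ht).resolve_right (exp_ne_zero _)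

/-- `∑ single l p_l` in the group algebra of `(ℂ, +)` over `ℂ[X]` encodes the formal
exponential polynomial `∑ p_l(X) e^{l X}`; this evaluates it on `ℝ`. -/
def expPolyEval : AddMonoidAlgebra ℂ[X] ℂ →ₐ[ℂ] (ℝ → ℂ) :=
  AddMonoidAlgebra.liftNCAlgHom (aeval fun t : ℝ => (t : ℂ))
    { toFun := fun l t => exp (l.toAdd * t)
      map_one' := by ext; simp
      map_mul' := fun l m => by ext; simp [add_mul, exp_add] }
    fun _ _ => Commute.all _ _

theorem expPolyEval_single (l : ℂ) (p : ℂ[X]) :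
    expPolyEval (AddMonoidAlgebra.single l p) = fun t : ℝ => p.eval (t : ℂ) * exp (l * t) := by
  ext t
  simp [expPolyEval]

theorem expPolyEval_apply (F : AddMonoidAlgebra ℂ[X] ℂ) (t : ℝ) :
    expPolyEval F t = ∑ l ∈ F.coeff.support, (F.coeff l).eval (t : ℂ) * exp (l * t) := by
  conv_lhs => rw [← F.sum_coeff_single, Finsupp.sum, map_sum]
  simp [expPolyEval_single]

theorem expPolyEval_injective : Function.Injective expPolyEval := by
  refine (injective_iff_map_eq_zero _).mpr fun F hF => ?_
  have hcoeff := eq_zero_of_sum_eval_mul_exp_eq_zero F.coeff.support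
    fun t => (expPolyEval_apply F t).symm.trans (congrFun hF t)
  rw [← AddMonoidAlgebra.coeff_eq_zero, ← Finsupp.support_eq_empty]
  exact Finset.eq_empty_of_forall_notMem fun l hl => Finsupp.mem_support_iff.mp hl (hcoeff l hl)

theorem expPolyEval_single_mem_bohl (l : ℂ) (p : ℂ[X]) :
    expPolyEval (AddMonoidAlgebra.single l p) ∈ Bohl := by
  induction p using Polynomial.induction_on' with
  | add p q hp hq => simpa only [AddMonoidAlgebra.single_add, map_add] using add_mem hp hq
  | monomial k c =>
    have hmem : (fun t : ℝ => (t : ℂ) ^ k * exp (l * t)) ∈ Bohl :=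
      Algebra.subset_adjoin ⟨k, l, rfl⟩
    convert Bohl.smul_mem hmem c using 1
    ext t
    simp [expPolyEval_single, mul_assoc]

theorem range_expPolyEval : expPolyEval.range = Bohl := by
  refine le_antisymm ?_ (Algebra.adjoin_le ?_)
  · rintro _ ⟨F, rfl⟩
    rw [← F.sum_coeff_single, Finsupp.sum, map_sum]
    exact Subalgebra.sum_mem _ fun l _ => expPolyEval_single_mem_bohl l _
  · rintro _ ⟨k, l, rfl⟩
    exact ⟨AddMonoidAlgebra.single l (X ^ k), by simp [expPolyEval_single]⟩

/-- The invertible elements of the Bohl algebra are exactly the functions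
`t ↦ c e^{λ t}` with `c ≠ 0`. -/
theorem bohl_units (f : ℝ → ℂ) (hf : f ∈ Bohl) :
    (∃ g : ℝ → ℂ, g ∈ Bohl ∧ f * g = 1) ↔
      ∃ (c l : ℂ), c ≠ 0 ∧ f = fun t : ℝ => c * Complex.exp (l * t) := by
  have hrange : (Bohl : Set (ℝ → ℂ)) = Set.range expPolyEval := by
    rw [← range_expPolyEval, AlgHom.coe_range]
  obtain ⟨F, rfl⟩ : f ∈ Set.range expPolyEval := hrange ▸ hf
  have hexp (c l : ℂ) : (fun t : ℝ => c * exp (l * t)) = expPolyEval (.single l (C c)) := by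
    simp [expPolyEval_single]
  calc (∃ g, g ∈ Bohl ∧ expPolyEval F * g = 1)
      ↔ IsUnit F := by
        simp only [← SetLike.mem_coe, hrange]
        exact expPolyEval_injective.isUnit_iff_exists_mem_range_mul_eq_one.symm
    _ ↔ ∃ l p, IsUnit p ∧ F = .single l p := AddMonoidAlgebra.isUnit_iff_exists_single
    _ ↔ ∃ c l, c ≠ 0 ∧ expPolyEval F = fun t : ℝ => c * exp (l * t) := by
        simp only [hexp, expPolyEval_injective.eq_iff, Polynomial.isUnit_iff, isUnit_iff_ne_zero]
        constructor
        · rintro ⟨l, _, ⟨c, hc, rfl⟩, rfl⟩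
          exact ⟨c, l, hc, rfl⟩
        · rintro ⟨c, l, hc, rfl⟩
          exact ⟨l, C c, ⟨c, hc, rfl⟩, rfl⟩
end
end

section
/- If f is an element of the Bohl algebra B that is invertible in B (there exists g ∈ B with f·g = 1 pointwise on ℝ), then the entire function F(z) = Σ_{j=1}^n p_j(z)·exp(λ_j·z) extending f (with the same polynomials p_j and exponents λ_j as in a representation of f) has no zeros in ℂ. -/
open Complex

noncomputable section

lemma bohl_extends {g : ℝ → ℂ} (hg : g ∈ Bohl) :
    ∃ G : ℂ → ℂ, Differentiable ℂ G ∧ ∀ t : ℝ, g t = G t := by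
  induction hg using Algebra.adjoin_induction with
  | mem x hx =>
    obtain ⟨k, l, rfl⟩ := hx
    exact ⟨fun z => z ^ k * Complex.exp (l * z),
      (differentiable_pow k).mul ((differentiable_const l |>.mul differentiable_id).cexp),
      fun t => rfl⟩
  | algebraMap c => exact ⟨fun _ => c, differentiable_const c, fun t => rfl⟩
  | add x y hx hy ihx ihy =>
    obtain ⟨G, hG, hGx⟩ := ihx
    obtain ⟨H, hH, hHy⟩ := ihy
    exact ⟨G + H, hG.add hH, fun t => by simp [hGx t, hHy t]⟩
  | mul x y hx hy ihx ihy =>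
    obtain ⟨G, hG, hGx⟩ := ihx
    obtain ⟨H, hH, hHy⟩ := ihy
    exact ⟨G * H, hG.mul hH, fun t => by simp [hGx t, hHy t]⟩

/-- If the restriction to `ℝ` of the entire function `F(z) = ∑ pⱼ(z) e^{λⱼ z}` is
invertible in the Bohl algebra, then `F` has no zeros in `ℂ`. -/
theorem invertible_extension_no_zeros (n : ℕ)
    (p : Fin n → Polynomial ℂ) (l : Fin n → ℂ) (F : ℂ → ℂ)
    (hF : F = fun z : ℂ => ∑ j, (p j).eval z * Complex.exp (l j * z))
    (hinv : ∃ g : ℝ → ℂ, g ∈ Bohl ∧ (fun t : ℝ => F (t : ℂ)) * g = 1) :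
    ∀ z : ℂ, F z ≠ 0 := by
  obtain ⟨g, hg, hfg⟩ := hinv
  obtain ⟨G, hGdiff, hGext⟩ := bohl_extends hg
  have hFdiff : Differentiable ℂ F := by
    rw [hF]
    exact Differentiable.fun_sum fun j _ =>
      ((p j).differentiable).mul ((differentiable_const (l j) |>.mul differentiable_id).cexp)
  set H : ℂ → ℂ := fun z => F z * G z - 1 with hHdef
  have hHdiff : Differentiable ℂ H := (hFdiff.mul hGdiff).sub_const 1
  have hHreal : ∀ t : ℝ, H (t : ℂ) = 0 := by
    intro t
    have := congrFun hfg t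
    simp only [Pi.mul_apply, Pi.one_apply] at this
    simp [hHdef, ← hGext t, this]
  have hHanalytic : AnalyticOnNhd ℂ H Set.univ := fun z _ => hHdiff.analyticAt z
  have hfreq : ∃ᶠ z in nhdsWithin (0 : ℂ) {(0 : ℂ)}ᶜ, H z = 0 := by
    have htend : Filter.Tendsto (fun k : ℕ => (((1 : ℝ) / (k + 1) : ℝ) : ℂ)) Filter.atTop
        (nhdsWithin (0 : ℂ) {(0 : ℂ)}ᶜ) := by
      apply tendsto_nhdsWithin_of_tendsto_nhds_of_eventually_within
      · have : Filter.Tendsto (fun k : ℕ => (1 : ℝ) / (k + 1)) Filter.atTop (nhds 0) :=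
          tendsto_one_div_add_atTop_nhds_zero_nat
        have := (Complex.continuous_ofReal.tendsto (0 : ℝ)).comp this
        simpa [Function.comp_def, one_div] using this
      · filter_upwards with k
        simp only [Set.mem_compl_iff, Set.mem_singleton_iff]
        intro h
        rw [Complex.ofReal_eq_zero] at h
        have : (0 : ℝ) < 1 / (k + 1) := by positivity
        linarith
    exact htend.frequently (Filter.Eventually.frequently
      (Filter.Eventually.of_forall fun k => hHreal _))
  have hzero := hHanalytic.eqOn_zero_of_preconnected_of_frequently_eq_zero
    isPreconnected_univ (Set.mem_univ 0) hfreq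
  intro z hz0
  have hz : H z = 0 := hzero (Set.mem_univ z)
  simp only [hHdef] at hz
  rw [hz0] at hz
  simp at hz
end
end

section
/- The Bohl algebra B is not a Noetherian ring. -/
open Complex

noncomputable section

/-!
The functions `a n = exp (t / 2^n) - 1` satisfy `a n = a (n + 1) * (exp (t / 2^(n+1)) + 1)`, so
their principal ideals form an ascending chain. It is strict: a quotient
`a (n + 1) / a n = 1 / (exp (t / 2^(n+1)) + 1)` in the Bohl algebra would, like every Bohl
function, extend to an entire function, whereas this one has a pole at `z = 2^(n+1) π i`.
-/

theorem Differentiable.eq_of_forall_pos_real {F G : ℂ → ℂ} (hF : Differentiable ℂ F)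
    (hG : Differentiable ℂ G) (h : ∀ t : ℝ, 0 < t → F t = G t) : F = G := by
  have hfreq : ∃ᶠ z in nhdsWithin (1 : ℂ) {1}ᶜ, F z = G z := by
    have hmaps : Set.MapsTo ((↑) : ℝ → ℂ) {1}ᶜ {1}ᶜ := fun t ht => by simpa using ht
    have htendsto := (continuous_ofReal.continuousWithinAt (x := 1)).tendsto_nhdsWithin hmaps
    rw [ofReal_one] at htendsto
    exact htendsto.frequently
      ((eventually_nhdsWithin_of_eventually_nhds (lt_mem_nhds one_pos)).mono h).frequently
  funext z
  exact ((analyticOnNhd_univ_iff_differentiable.mpr hF).eqOn_of_preconnected_of_frequently_eq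
    (analyticOnNhd_univ_iff_differentiable.mpr hG)
    isPreconnected_univ (Set.mem_univ 1) hfreq) (Set.mem_univ z)

namespace Bohl

theorem exists_differentiable_extension (f : Bohl) :
    ∃ F : ℂ → ℂ, Differentiable ℂ F ∧ ∀ t : ℝ, F t = (f : ℝ → ℂ) t := by
  obtain ⟨f, hf⟩ := f
  induction hf using Algebra.adjoin_induction with
  | mem f hf =>
    obtain ⟨k, l, rfl⟩ := hf
    exact ⟨fun z => z ^ k * Complex.exp (l * z),
      (differentiable_pow k).mul (differentiable_id.const_mul l).cexp, fun _ => rfl⟩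
  | algebraMap c => exact ⟨fun _ => c, differentiable_const c, fun _ => rfl⟩
  | add f g _ _ ihf ihg =>
    obtain ⟨F, hF, hFf⟩ := ihf
    obtain ⟨G, hG, hGg⟩ := ihg
    exact ⟨F + G, hF.add hG, fun t => by simp [hFf t, hGg t]⟩
  | mul f g _ _ ihf ihg =>
    obtain ⟨F, hF, hFf⟩ := ihf
    obtain ⟨G, hG, hGg⟩ := ihg
    exact ⟨F * G, hF.mul hG, fun t => by simp [hFf t, hGg t]⟩

protected def exp (l : ℂ) : Bohl :=
  ⟨fun t : ℝ => Complex.exp (l * t), Algebra.subset_adjoin ⟨0, l, by simp⟩⟩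

@[simp]
theorem coe_exp_apply (l : ℂ) (t : ℝ) : (Bohl.exp l : ℝ → ℂ) t = Complex.exp (l * t) := rfl

theorem exp_add (l m : ℂ) : Bohl.exp (l + m) = Bohl.exp l * Bohl.exp m := by
  ext t
  simp [add_mul, Complex.exp_add]

theorem exp_two_mul_sub_one (l : ℂ) :
    Bohl.exp (2 * l) - 1 = (Bohl.exp l - 1) * (Bohl.exp l + 1) := by
  rw [two_mul, exp_add]
  ring

theorem not_exp_two_mul_sub_one_dvd {r : ℝ} (hr : r ≠ 0) :
    ¬ Bohl.exp (2 * r) - 1 ∣ Bohl.exp r - 1 := by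
  rintro ⟨g, hg⟩
  rw [exp_two_mul_sub_one] at hg
  have hinv : ∀ t : ℝ, 0 < t → (Complex.exp (r * t) + 1) * (g : ℝ → ℂ) t = 1 := by
    intro t ht
    have hne : Complex.exp (r * t) - 1 ≠ 0 := by
      rw [sub_ne_zero, ← ofReal_mul, ← ofReal_exp, ← ofReal_one, Ne, ofReal_inj,
        Real.exp_eq_one_iff]
      exact mul_ne_zero hr ht.ne'
    have hgt := congrFun (congrArg Subtype.val hg) t
    simp only [Subalgebra.coe_sub, Subalgebra.coe_mul, Subalgebra.coe_add, Subalgebra.coe_one,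
      Pi.sub_apply, Pi.mul_apply, Pi.add_apply, Pi.one_apply, coe_exp_apply] at hgt
    exact mul_left_cancel₀ hne (by rw [← mul_assoc, ← hgt, mul_one])
  obtain ⟨G, hG, hGg⟩ := exists_differentiable_extension g
  -- `1 / (exp (r z) + 1)` cannot be entire: `exp (r z) + 1` vanishes at `z = π i / r`.
  have hentire : (fun z => (Complex.exp (r * z) + 1) * G z) = fun _ => 1 :=
    ((differentiable_id.const_mul _).cexp.add_const 1).mul hG |>.eq_of_forall_pos_real
      (differentiable_const 1) fun t ht => by simp [hGg t, hinv t ht]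
  have hpole : Complex.exp (r * (Real.pi * I / r)) = -1 := by
    rw [mul_div_cancel₀ _ (ofReal_ne_zero.mpr hr), exp_pi_mul_I]
  simpa [hpole] using congrFun hentire (Real.pi * I / r)

theorem span_exp_two_mul_sub_one_lt {r : ℝ} (hr : r ≠ 0) :
    Ideal.span {Bohl.exp (2 * r) - 1} < Ideal.span {Bohl.exp r - 1} := by
  simp only [lt_iff_le_not_ge, Ideal.span_singleton_le_span_singleton]
  exact ⟨exp_two_mul_sub_one (r : ℂ) ▸ dvd_mul_right _ _, not_exp_two_mul_sub_one_dvd hr⟩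

end Bohl

/-- The Bohl algebra is not a Noetherian ring. -/
theorem bohl_not_noetherian : ¬ IsNoetherianRing Bohl := by
  intro _
  refine not_strictMono_of_wellFoundedGT
    (fun n => Ideal.span {Bohl.exp (((1 / 2 : ℝ) ^ n : ℝ) : ℂ) - 1}) (strictMono_nat_of_lt_succ
    fun n => ?_)
  have hhalf : (((1 / 2 : ℝ) ^ n : ℝ) : ℂ) = ((2 * (1 / 2 : ℝ) ^ (n + 1) : ℝ) : ℂ) := by
    push_cast
    ring
  simpa only [hhalf, ofReal_mul, ofReal_ofNat] using
    Bohl.span_exp_two_mul_sub_one_lt (r := (1 / 2 : ℝ) ^ (n + 1)) (by positivity)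
end
end
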